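/- arXiv:1004.4058 — 2 statements merged into one kernel-verified Lean document; each statement's English description precedes it below -/
import Mathlib

section
/- A Kähler manifold M of real dimension 2m has vanishing Bochner curvature tensor if and only if for each point p of M the sum Σ_{i=1}^m R(e_i, Je_i, Je_i, e_i) is independent of the choice of orthonormal basis {e_i, Je_i : i = 1, ..., m} of T_p M adapted to J. -/
open scoped RealInnerProductSpace

/-- A compatible (orthogonal) complex structure on a real inner product space. -/
def IsComplexStructure {V : Type*} [NormedAddCommGroup V] [InnerProductSpace ℝ V]
    (J : V →ₗ[ℝ] V) : Prop :=
  (∀ x, J (J x) = -x) ∧ ∀ x y : V, ⟪J x, J y⟫ = ⟪x, y⟫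

/-- A (0,4) curvature-type tensor. -/
abbrev CurvTensor (V : Type*) [NormedAddCommGroup V] [InnerProductSpace ℝ V] :=
  V →ₗ[ℝ] V →ₗ[ℝ] V →ₗ[ℝ] V →ₗ[ℝ] ℝ

/-- An algebraic curvature tensor of Kähler type. -/
structure IsKahlerCurv {V : Type*} [NormedAddCommGroup V] [InnerProductSpace ℝ V]
    (J : V →ₗ[ℝ] V) (R : CurvTensor V) : Prop where
  skew₁ : ∀ x y z u, R x y z u = - R y x z u
  skew₂ : ∀ x y z u, R x y z u = - R x y u z
  symm : ∀ x y z u, R x y z u = R z u x y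
  bianchi : ∀ x y z u, R x y z u + R y z x u + R z x y u = 0
  kahler : ∀ x y z u, R x y z u = R x y (J z) (J u)

/-- The Ricci tensor of an algebraic curvature tensor. -/
noncomputable def ricciT {V : Type*} [NormedAddCommGroup V] [InnerProductSpace ℝ V]
    [FiniteDimensional ℝ V] (R : CurvTensor V) (y z : V) : ℝ :=
  ∑ i, R (stdOrthonormalBasis ℝ V i) y z (stdOrthonormalBasis ℝ V i)

/-- The scalar curvature of an algebraic curvature tensor. -/
noncomputable def scalarT {V : Type*} [NormedAddCommGroup V] [InnerProductSpace ℝ V]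
    [FiniteDimensional ℝ V] (R : CurvTensor V) : ℝ :=
  ∑ i, ricciT R (stdOrthonormalBasis ℝ V i) (stdOrthonormalBasis ℝ V i)

/-- The Bochner curvature tensor of a Kähler-type curvature tensor
(`2 * m` is the dimension). -/
noncomputable def bochnerT {V : Type*} [NormedAddCommGroup V] [InnerProductSpace ℝ V]
    [FiniteDimensional ℝ V] (m : ℕ) (J : V →ₗ[ℝ] V) (R : CurvTensor V)
    (x y z u : V) : ℝ :=
  R x y z u
  - (1 / (2 * ((m : ℝ) + 2))) *
      ( ⟪x, u⟫ * ricciT R y z - ⟪x, z⟫ * ricciT R y u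
      + ⟪y, z⟫ * ricciT R x u - ⟪y, u⟫ * ricciT R x z
      + ⟪x, J u⟫ * ricciT R y (J z) - ⟪x, J z⟫ * ricciT R y (J u)
      + ⟪y, J z⟫ * ricciT R x (J u) - ⟪y, J u⟫ * ricciT R x (J z)
      - 2 * ⟪x, J y⟫ * ricciT R z (J u) - 2 * ⟪z, J u⟫ * ricciT R x (J y) )
  + (scalarT R / (4 * ((m : ℝ) + 1) * ((m : ℝ) + 2))) *
      ( ⟪x, u⟫ * ⟪y, z⟫ - ⟪x, z⟫ * ⟪y, u⟫
      + ⟪x, J u⟫ * ⟪y, J z⟫ - ⟪x, J z⟫ * ⟪y, J u⟫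
      - 2 * ⟪x, J y⟫ * ⟪z, J u⟫ )

/-- `x, Jx, y, Jy, z, Jz` are pairwise orthogonal, i.e. `x, y, z` span an
antiholomorphic 3-plane. -/
def AntiholoTriple {V : Type*} [NormedAddCommGroup V] [InnerProductSpace ℝ V]
    (J : V →ₗ[ℝ] V) (x y z : V) : Prop :=
  ⟪x, y⟫ = 0 ∧ ⟪x, z⟫ = 0 ∧ ⟪y, z⟫ = 0 ∧
  ⟪x, J x⟫ = 0 ∧ ⟪y, J y⟫ = 0 ∧ ⟪z, J z⟫ = 0 ∧
  ⟪x, J y⟫ = 0 ∧ ⟪x, J z⟫ = 0 ∧ ⟪y, J z⟫ = 0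

/-- A `J`-adapted orthonormal family `{e i, J (e i)}`. -/
def IsAdaptedBasis {V : Type*} [NormedAddCommGroup V] [InnerProductSpace ℝ V]
    (J : V →ₗ[ℝ] V) {m : ℕ} (e : Fin m → V) : Prop :=
  (∀ i j, ⟪e i, e j⟫ = if i = j then 1 else 0) ∧ ∀ i j, ⟪e i, J (e j)⟫ = 0

/-!
Both conditions are statements about the holomorphic sectional curvature
`Q(x) = R(x, Jx, Jx, x)`. A Kähler curvature tensor is determined by `Q` (polarize
`Q(x ± y)`), and the Bochner tensor `B` is again of Kähler type, with
`Q_B(x) = Q(x) - 4 |x|² Ric(x, x) / (m + 2) + τ |x|⁴ / ((m + 1)(m + 2))`.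
If `B = 0`, summing this over an adapted basis gives `Σ Q(eᵢ) = τ / (m + 1)`.
Conversely, if `Σ Q(eᵢ) = C` for every adapted basis, rotating a pair `eᵢ, eⱼ` (or `eᵢ, Jeⱼ`)
into `(eᵢ ± eⱼ) / √2` gives `4 (K(eᵢ, eⱼ) + K(eᵢ, Jeⱼ)) = Q(eᵢ) + Q(eⱼ)` for the sectional
numerator `K(x, y) = R(x, y, y, x)`. Summing over the basis, `4 Ric(x, x) = (m + 2) Q(x) + C`
for every unit vector `x`, so `τ = (m + 1) C` and `Q_B = 0`, i.e. `B = 0`.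
-/

namespace IsComplexStructure

variable {V : Type*} [NormedAddCommGroup V] [InnerProductSpace ℝ V] {J : V →ₗ[ℝ] V}

lemma apply_apply (hJ : IsComplexStructure J) (x : V) : J (J x) = -x := hJ.1 x

lemma inner_map_map (hJ : IsComplexStructure J) (x y : V) : ⟪J x, J y⟫ = ⟪x, y⟫ := hJ.2 x y

lemma inner_map_left (hJ : IsComplexStructure J) (x y : V) : ⟪J x, y⟫ = -⟪x, J y⟫ := by
  rw [← hJ.inner_map_map x (J y), hJ.apply_apply, inner_neg_right, neg_neg]

lemma inner_self_map (hJ : IsComplexStructure J) (x : V) : ⟪x, J x⟫ = 0 := by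
  have := hJ.inner_map_left x x
  rw [real_inner_comm] at this
  linarith

noncomputable def toLinearIsometryEquiv (hJ : IsComplexStructure J) : V ≃ₗᵢ[ℝ] V :=
  LinearEquiv.isometryOfInner
    { J with
      invFun := fun x => -J x
      left_inv := fun x => by simp [hJ.apply_apply]
      right_inv := fun x => by simp [hJ.apply_apply] }
    hJ.inner_map_map

@[simp] lemma toLinearIsometryEquiv_apply (hJ : IsComplexStructure J) (x : V) :
    hJ.toLinearIsometryEquiv x = J x := rfl

end IsComplexStructure

lemma OrthonormalBasis.sum_apply_self_eq {V ι κ : Type*} [NormedAddCommGroup V]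
    [InnerProductSpace ℝ V] [Fintype ι] [Fintype κ]
    (b : OrthonormalBasis ι ℝ V) (c : OrthonormalBasis κ ℝ V) (φ : V →ₗ[ℝ] V →ₗ[ℝ] ℝ) :
    ∑ i, φ (b i) (b i) = ∑ j, φ (c j) (c j) := by
  have expand (x : V) : φ x x = ∑ j, φ (c j) (⟪c j, x⟫ • x) := by
    calc φ x x = φ (∑ j, ⟪c j, x⟫ • c j) x := by rw [c.sum_repr']
      _ = _ := by simp [map_sum, LinearMap.sum_apply]
  calc ∑ i, φ (b i) (b i) = ∑ i, ∑ j, φ (c j) (⟪c j, b i⟫ • b i) := by simp only [expand]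
    _ = ∑ j, φ (c j) (c j) := by
        rw [Finset.sum_comm]
        refine Finset.sum_congr rfl fun j _ => ?_
        rw [← map_sum]
        congr 1
        simpa only [real_inner_comm (c j)] using b.sum_repr' (c j)

section Ricci

variable {V : Type*} [NormedAddCommGroup V] [InnerProductSpace ℝ V] [FiniteDimensional ℝ V]

noncomputable def ricciForm (R : CurvTensor V) : V →ₗ[ℝ] V →ₗ[ℝ] ℝ :=
  LinearMap.mk₂ ℝ (ricciT R)
    (fun y y' z => by simp [ricciT, Finset.sum_add_distrib])
    (fun c y z => by simp [ricciT, Finset.mul_sum])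
    (fun y z z' => by simp [ricciT, Finset.sum_add_distrib])
    (fun c y z => by simp [ricciT, Finset.mul_sum])

@[simp] lemma ricciForm_apply (R : CurvTensor V) (y z : V) : ricciForm R y z = ricciT R y z := rfl

lemma ricciT_eq_sum {ι : Type*} [Fintype ι] (b : OrthonormalBasis ι ℝ V) (R : CurvTensor V)
    (y z : V) : ricciT R y z = ∑ i, R (b i) y z (b i) :=
  (stdOrthonormalBasis ℝ V).sum_apply_self_eq b ((R.flip y).flip z)

lemma scalarT_eq_sum {ι : Type*} [Fintype ι] (b : OrthonormalBasis ι ℝ V) (R : CurvTensor V) :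
    scalarT R = ∑ i, ricciT R (b i) (b i) :=
  (stdOrthonormalBasis ℝ V).sum_apply_self_eq b (ricciForm R)

end Ricci

/-- `R(x, Jx, Jx, x)`: the holomorphic sectional curvature of `x`, times `‖x‖⁴`. -/
def holSec {V : Type*} [NormedAddCommGroup V] [InnerProductSpace ℝ V] (J : V →ₗ[ℝ] V)
    (R : CurvTensor V) (x : V) : ℝ :=
  R x (J x) (J x) x

lemma holSec_smul {V : Type*} [NormedAddCommGroup V] [InnerProductSpace ℝ V] {J : V →ₗ[ℝ] V}
    {R : CurvTensor V} (c : ℝ) (x : V) : holSec J R (c • x) = c ^ 4 * holSec J R x := by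
  simp only [holSec, map_smul, LinearMap.smul_apply, smul_eq_mul]
  ring

namespace IsKahlerCurv

variable {V : Type*} [NormedAddCommGroup V] [InnerProductSpace ℝ V] {J : V →ₗ[ℝ] V}
  {R : CurvTensor V}

lemma pair_swap (hK : IsKahlerCurv J R) (x y z u : V) : R x y z u = R y x u z := by
  rw [hK.skew₁, hK.skew₂, neg_neg]

lemma map_map_left (hK : IsKahlerCurv J R) (x y z u : V) : R (J x) (J y) z u = R x y z u := by
  rw [hK.symm, ← hK.kahler, hK.symm]

lemma add {A : CurvTensor V} (hR : IsKahlerCurv J R) (hA : IsKahlerCurv J A) :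
    IsKahlerCurv J (R + A) where
  skew₁ x y z u := by simp only [LinearMap.add_apply]; rw [hR.skew₁, hA.skew₁]; ring
  skew₂ x y z u := by simp only [LinearMap.add_apply]; rw [hR.skew₂, hA.skew₂]; ring
  symm x y z u := by simp only [LinearMap.add_apply]; rw [hR.symm, hA.symm]
  bianchi x y z u := by
    simp only [LinearMap.add_apply]
    linear_combination hR.bianchi x y z u + hA.bianchi x y z u
  kahler x y z u := by simp only [LinearMap.add_apply]; rw [hR.kahler, hA.kahler]

lemma smul (c : ℝ) (hR : IsKahlerCurv J R) : IsKahlerCurv J (c • R) where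
  skew₁ x y z u := by simp only [LinearMap.smul_apply, smul_eq_mul]; rw [hR.skew₁]; ring
  skew₂ x y z u := by simp only [LinearMap.smul_apply, smul_eq_mul]; rw [hR.skew₂]; ring
  symm x y z u := by simp only [LinearMap.smul_apply, smul_eq_mul]; rw [hR.symm]
  bianchi x y z u := by
    simp only [LinearMap.smul_apply, smul_eq_mul]
    linear_combination c * hR.bianchi x y z u
  kahler x y z u := by simp only [LinearMap.smul_apply, smul_eq_mul]; rw [hR.kahler]

lemma eq_zero_of_sec_eq_zero (hK : IsKahlerCurv J R) (hsec : ∀ x y, R x y y x = 0) : R = 0 := by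
  have hsec₂ (x y z : V) : R x y y z = 0 := by
    have := hsec (x + z) y
    simp only [map_add, LinearMap.add_apply, hsec] at this
    linarith [hK.symm z y y x, hK.pair_swap y x z y]
  have hmid (x y z u : V) : R x y z u = -R x z y u := by
    have := hsec₂ x (y + z) u
    simp only [map_add, LinearMap.add_apply, hsec₂] at this
    linarith
  ext x y z u
  simp only [LinearMap.zero_apply]
  have h₁ : R y z x u = R x y z u := by rw [hmid, ← hK.skew₁]
  have h₂ : R z x y u = R x y z u := by rw [hmid, hK.skew₁, neg_neg, h₁]
  linarith [hK.bianchi x y z u]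

section Holomorphic

variable (hK : IsKahlerCurv J R) (hJ : IsComplexStructure J)
include hK hJ

lemma holSec_map (x : V) : holSec J R (J x) = holSec J R x := by
  simp only [holSec, hJ.apply_apply, map_neg, LinearMap.neg_apply, neg_neg]
  exact (hK.pair_swap x (J x) (J x) x).symm

lemma holSec_add_add_holSec_sub (x y : V) :
    holSec J R (x + y) + holSec J R (x - y) = 2 * holSec J R x + 2 * holSec J R y
      + 4 * R x y y x + 12 * R x (J y) (J y) x := by
  have hd : R x (J y) (J x) y = R x (J y) (J y) x := by
    rw [hK.kahler x (J y) (J x) y, hJ.apply_apply, hK.skew₂]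
    simp
  have ha : R y (J y) (J x) x = R x (J x) (J y) y := by
    rw [hK.symm, hK.pair_swap]
  have hb : R y (J x) (J y) x = R x (J y) (J y) x := by
    rw [hK.symm, hK.pair_swap, hd]
  have hc : R y (J x) (J x) y = R x (J y) (J y) x := by
    rw [hK.kahler y (J x) (J x) y, hJ.apply_apply, ← hb, hK.skew₂]
    simp
  have hf : R x (J x) (J y) y = R x y y x + R x (J y) (J y) x := by
    have h₁ : R (J x) (J y) x y = -R x y y x := by rw [hK.map_map_left, hK.skew₂]
    have h₂ : R (J y) x (J x) y = -R x (J y) (J y) x := by rw [hK.skew₁, hd]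
    linarith [hK.bianchi x (J x) (J y) y]
  rw [sub_eq_add_neg, ← neg_one_smul ℝ y]
  simp only [holSec, map_add, map_smul, LinearMap.add_apply, LinearMap.smul_apply, smul_eq_mul]
  linear_combination 2 * ha + 2 * hb + 2 * hc + 2 * hd + 4 * hf

lemma eq_zero_of_holSec_eq_zero (hQ : ∀ x, holSec J R x = 0) : R = 0 := by
  have h (x y : V) : R x y y x + 3 * R x (J y) (J y) x = 0 := by
    linarith [hK.holSec_add_add_holSec_sub hJ x y, hQ (x + y), hQ (x - y), hQ x, hQ y]
  refine hK.eq_zero_of_sec_eq_zero fun x y => ?_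
  have := h x (J y)
  simp only [hJ.apply_apply, map_neg, LinearMap.neg_apply, neg_neg] at this
  linarith [h x y]

end Holomorphic

variable [FiniteDimensional ℝ V]

lemma ricciT_comm (hK : IsKahlerCurv J R) (y z : V) : ricciT R y z = ricciT R z y :=
  Finset.sum_congr rfl fun _ _ => by rw [hK.symm, hK.pair_swap]

lemma ricciT_map_map (hK : IsKahlerCurv J R) (hJ : IsComplexStructure J) (y z : V) :
    ricciT R (J y) (J z) = ricciT R y z := by
  have hmove (a : V) : R a (J y) (J z) a = R (J a) y z (J a) := by
    rw [← hK.map_map_left a (J y), hK.kahler (J a), hJ.apply_apply, hJ.apply_apply]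
    simp
  rw [ricciT_eq_sum ((stdOrthonormalBasis ℝ V).map hJ.toLinearIsometryEquiv) R y z]
  simp [ricciT, hmove]

end IsKahlerCurv

section Bochner

variable {V : Type*} [NormedAddCommGroup V] [InnerProductSpace ℝ V] {J : V →ₗ[ℝ] V}

/-- The bracket that `bochnerT` builds from the Ricci tensor, for an arbitrary bilinear form. -/
noncomputable def bochnerBracket (J : V →ₗ[ℝ] V) (S : V →ₗ[ℝ] V →ₗ[ℝ] ℝ) : CurvTensor V :=
  LinearMap.mk₂ ℝ
    (fun x y => LinearMap.mk₂ ℝ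
      (fun z u =>
        ⟪x, u⟫ * S y z - ⟪x, z⟫ * S y u + ⟪y, z⟫ * S x u - ⟪y, u⟫ * S x z
        + ⟪x, J u⟫ * S y (J z) - ⟪x, J z⟫ * S y (J u)
        + ⟪y, J z⟫ * S x (J u) - ⟪y, J u⟫ * S x (J z)
        - 2 * ⟪x, J y⟫ * S z (J u) - 2 * ⟪z, J u⟫ * S x (J y))
      (fun _ _ _ => by
        simp only [map_add, LinearMap.add_apply, inner_add_left, inner_add_right]
        ring)
      (fun _ _ _ => by
        simp only [map_smul, LinearMap.smul_apply, smul_eq_mul, real_inner_smul_left,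
          real_inner_smul_right]
        ring)
      (fun _ _ _ => by simp only [map_add, inner_add_right]; ring)
      (fun _ _ _ => by simp only [map_smul, smul_eq_mul, real_inner_smul_right]; ring))
    (fun _ _ _ => by
      ext
      simp only [map_add, LinearMap.add_apply, LinearMap.mk₂_apply, inner_add_left]
      ring)
    (fun _ _ _ => by
      ext
      simp only [map_smul, LinearMap.smul_apply, LinearMap.mk₂_apply, smul_eq_mul,
        real_inner_smul_left]
      ring)
    (fun _ _ _ => by
      ext
      simp only [map_add, LinearMap.add_apply, LinearMap.mk₂_apply, inner_add_left,
        inner_add_right]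
      ring)
    (fun _ _ _ => by
      ext
      simp only [map_smul, LinearMap.smul_apply, LinearMap.mk₂_apply, smul_eq_mul,
        real_inner_smul_left, real_inner_smul_right]
      ring)

variable {S : V →ₗ[ℝ] V →ₗ[ℝ] ℝ} (hJ : IsComplexStructure J) (hS : ∀ a b, S a b = S b a)
  (hSJ : ∀ a b, S (J a) (J b) = S a b)
include hJ hS hSJ

lemma isKahlerCurv_bochnerBracket : IsKahlerCurv J (bochnerBracket J S) := by
  have hSJ' (a b : V) : S (J a) b = -S a (J b) := by
    rw [← hSJ a (J b), hJ.apply_apply, map_neg, neg_neg]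
  have hS' (a b : V) : S b (J a) = -S a (J b) := by rw [hS, hSJ']
  have hg' (a b : V) : ⟪b, J a⟫ = -⟪a, J b⟫ := by
    rw [← hJ.inner_map_left, real_inner_comm]
  constructor <;> intro x y z u <;> simp only [bochnerBracket, LinearMap.mk₂_apply]
  case skew₁ =>
    rw [hg' x y, hS' x y]
    ring
  case skew₂ =>
    rw [hg' z u, hS' z u]
    ring
  case symm =>
    rw [hg' y z, hg' x z, hg' x u, hg' y u, hS' x u, hS' y u, hS' y z, hS' x z,
      real_inner_comm z y, real_inner_comm z x, real_inner_comm u x, real_inner_comm u y,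
      hS u x, hS u y, hS z y, hS z x]
    ring
  case bianchi =>
    rw [hg' x y, hg' x z, hg' y z, hS' x z, hS' x y, hS' y z,
      real_inner_comm y x, real_inner_comm z x, real_inner_comm z y, hS z x, hS y x, hS z y]
    ring
  case kahler =>
    simp only [hJ.apply_apply, map_neg, inner_neg_right, hSJ', hJ.inner_map_left]
    ring

lemma holSec_bochnerBracket (x : V) : holSec J (bochnerBracket J S) x = 8 * ⟪x, x⟫ * S x x := by
  have hS₀ : S x (J x) = 0 := by
    have := hSJ x (J x)
    rw [hJ.apply_apply, map_neg, hS] at this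
    linarith
  simp only [holSec, bochnerBracket, LinearMap.mk₂_apply, hJ.apply_apply, map_neg,
    inner_neg_right, hJ.inner_map_map, hSJ, hS₀, hJ.inner_self_map, real_inner_comm x (J x)]
  ring

end Bochner

section BochnerCurv

variable {V : Type*} [NormedAddCommGroup V] [InnerProductSpace ℝ V] [FiniteDimensional ℝ V]
  {J : V →ₗ[ℝ] V} {R : CurvTensor V}

/-- `bochnerT` as a curvature tensor. The `g`-bracket of `bochnerT` is half of
`bochnerBracket J (innerₗ V)`, whence the `8` in place of `4`. -/
noncomputable def bochnerCurv (m : ℕ) (J : V →ₗ[ℝ] V) (R : CurvTensor V) : CurvTensor V :=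
  R + (-(1 / (2 * ((m : ℝ) + 2)))) • bochnerBracket J (ricciForm R)
    + (scalarT R / (8 * ((m : ℝ) + 1) * ((m : ℝ) + 2))) • bochnerBracket J (innerₗ V)

lemma bochnerCurv_apply (m : ℕ) (x y z u : V) :
    bochnerCurv m J R x y z u = bochnerT m J R x y z u := by
  simp only [bochnerCurv, bochnerT, bochnerBracket, LinearMap.add_apply, LinearMap.smul_apply,
    LinearMap.mk₂_apply, ricciForm_apply, innerₗ_apply_apply, smul_eq_mul]
  field_simp
  ring

variable (hK : IsKahlerCurv J R) (hJ : IsComplexStructure J)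
include hK hJ

lemma isKahlerCurv_bochnerCurv (m : ℕ) : IsKahlerCurv J (bochnerCurv m J R) :=
  (hK.add ((isKahlerCurv_bochnerBracket hJ (by simpa using hK.ricciT_comm)
      (by simpa using hK.ricciT_map_map hJ)).smul _)).add
    ((isKahlerCurv_bochnerBracket hJ (by simp [real_inner_comm])
      (by simpa using hJ.inner_map_map)).smul _)

lemma holSec_bochnerCurv (m : ℕ) (x : V) :
    holSec J (bochnerCurv m J R) x = holSec J R x - 4 * ⟪x, x⟫ * ricciT R x x / ((m : ℝ) + 2)
      + scalarT R * ⟪x, x⟫ ^ 2 / (((m : ℝ) + 1) * ((m : ℝ) + 2)) := by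
  have hsplit : holSec J (bochnerCurv m J R) x = holSec J R x
      + (-(1 / (2 * ((m : ℝ) + 2)))) * holSec J (bochnerBracket J (ricciForm R)) x
      + scalarT R / (8 * ((m : ℝ) + 1) * ((m : ℝ) + 2))
        * holSec J (bochnerBracket J (innerₗ V)) x :=
    rfl
  rw [hsplit, holSec_bochnerBracket hJ (by simpa using hK.ricciT_comm)
      (by simpa using hK.ricciT_map_map hJ),
    holSec_bochnerBracket hJ (by simp [real_inner_comm]) (by simpa using hJ.inner_map_map)]
  simp only [ricciForm_apply, innerₗ_apply_apply]
  field_simp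
  ring

end BochnerCurv

namespace IsAdaptedBasis

variable {V : Type*} [NormedAddCommGroup V] [InnerProductSpace ℝ V] {J : V →ₗ[ℝ] V} {m : ℕ}
  {e : Fin m → V}

lemma orthonormal_sumElim (hJ : IsComplexStructure J) (he : IsAdaptedBasis J e) :
    Orthonormal ℝ (Sum.elim e (J ∘ e)) := by
  rw [orthonormal_iff_ite]
  rintro (i | i) (j | j) <;>
    simp [he.1, he.2, hJ.inner_map_left, hJ.apply_apply]

lemma update_map (hJ : IsComplexStructure J) (he : IsAdaptedBasis J e) (j : Fin m) :
    IsAdaptedBasis J (Function.update e j (J (e j))) := by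
  constructor <;> intro p q <;> simp only [Function.update_apply] <;> split_ifs <;> subst_vars <;>
    simp only [hJ.inner_map_map, hJ.inner_map_left, hJ.apply_apply, inner_neg_right, he.1, he.2] <;>
    simp_all [he.2, eq_comm]

lemma update_rotate (he : IsAdaptedBasis J e) {i j : Fin m} (hij : i ≠ j) {c : ℝ}
    (hc : c * c = 1 / 2) :
    IsAdaptedBasis J
      (Function.update (Function.update e i (c • (e i + e j))) j (c • (e i - e j))) := by
  constructor <;> intro p q <;> simp only [Function.update_apply] <;> split_ifs <;> subst_vars <;>
    simp only [map_add, map_sub, map_smul, inner_add_left, inner_add_right, inner_sub_left,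
      inner_sub_right, real_inner_smul_left, real_inner_smul_right, he.1, he.2] <;>
    simp_all [eq_comm] <;>
    linear_combination 2 * hc

variable [FiniteDimensional ℝ V] (hdim : Module.finrank ℝ V = 2 * m) (hJ : IsComplexStructure J)
include hdim hJ

noncomputable def toOrthonormalBasis (he : IsAdaptedBasis J e) :
    OrthonormalBasis (Fin m ⊕ Fin m) ℝ V :=
  OrthonormalBasis.mk (he.orthonormal_sumElim hJ)
    ((he.orthonormal_sumElim hJ).linearIndependent.span_eq_top_of_card_eq_finrank'
      (by simp [hdim, two_mul])).ge

@[simp] lemma coe_toOrthonormalBasis (he : IsAdaptedBasis J e) :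
    ⇑(he.toOrthonormalBasis hdim hJ) = Sum.elim e (J ∘ e) :=
  OrthonormalBasis.coe_mk _ _

lemma ricciT_eq_sum (he : IsAdaptedBasis J e) (R : CurvTensor V) (y z : V) :
    ricciT R y z = ∑ i, (R (e i) y z (e i) + R (J (e i)) y z (J (e i))) := by
  simp [_root_.ricciT_eq_sum (he.toOrthonormalBasis hdim hJ), Finset.sum_add_distrib]

lemma scalarT_eq_sum (he : IsAdaptedBasis J e) {R : CurvTensor V} (hK : IsKahlerCurv J R) :
    scalarT R = 2 * ∑ i, ricciT R (e i) (e i) := by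
  simp [_root_.scalarT_eq_sum (he.toOrthonormalBasis hdim hJ), hK.ricciT_map_map hJ, two_mul]

lemma exists_cons {k : ℕ} {e : Fin k → V} (he : IsAdaptedBasis J e) (hk : k < m) :
    ∃ x, IsAdaptedBasis J (Fin.cons x e : Fin (k + 1) → V) := by
  set W := Submodule.span ℝ (Set.range (Sum.elim e (J ∘ e)))
  have hW : Wᗮ ≠ ⊥ := by
    rw [Ne, Submodule.orthogonal_eq_bot_iff]
    intro hW
    have : Module.finrank ℝ W ≤ Fintype.card (Fin k ⊕ Fin k) := finrank_range_le_card _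
    rw [hW, finrank_top, hdim, Fintype.card_sum, Fintype.card_fin] at this
    omega
  obtain ⟨v, hvW, hv⟩ := Submodule.exists_mem_ne_zero_of_ne_bot hW
  obtain ⟨x, hx, hxW⟩ : ∃ x, ‖x‖ = 1 ∧ x ∈ Wᗮ :=
    ⟨‖v‖⁻¹ • v, norm_smul_inv_norm hv, Wᗮ.smul_mem _ hvW⟩
  have hxe (i : Fin k) : ⟪e i, x⟫ = 0 :=
    (Submodule.mem_orthogonal _ _).mp hxW _ (Submodule.subset_span ⟨Sum.inl i, rfl⟩)
  have hxJe (i : Fin k) : ⟪J (e i), x⟫ = 0 :=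
    (Submodule.mem_orthogonal _ _).mp hxW _ (Submodule.subset_span ⟨Sum.inr i, rfl⟩)
  have hex (i : Fin k) : ⟪x, e i⟫ = 0 := by rw [real_inner_comm, hxe]
  have hxJe' (i : Fin k) : ⟪x, J (e i)⟫ = 0 := by rw [real_inner_comm, hxJe]
  have heJx (i : Fin k) : ⟪e i, J x⟫ = 0 := by
    rw [← neg_eq_zero, ← hJ.inner_map_left, hxJe]
  refine ⟨x, ?_, ?_⟩ <;> intro i j <;> cases i using Fin.cases <;> cases j using Fin.cases
    <;> simp [he.1, he.2, hx, hxe, hex, hxJe', heJx, hJ.inner_self_map,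
      (Fin.succ_ne_zero _).symm]

lemma exists_range_subset {k : ℕ} {e : Fin k → V} (he : IsAdaptedBasis J e) (hk : k ≤ m) :
    ∃ f : Fin m → V, IsAdaptedBasis J f ∧ Set.range e ⊆ Set.range f := by
  suffices ∀ n, k ≤ n → n ≤ m → ∃ f : Fin n → V, IsAdaptedBasis J f ∧ Set.range e ⊆ Set.range f
    from this m hk le_rfl
  intro n hkn
  induction n, hkn using Nat.le_induction with
  | base => exact fun _ => ⟨e, he, subset_rfl⟩
  | succ n _ ih =>
    intro hn
    obtain ⟨f, hf, hef⟩ := ih (by omega)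
    obtain ⟨x, hx⟩ := hf.exists_cons hdim hJ (by omega)
    exact ⟨_, hx, hef.trans (by simp [Set.subset_insert])⟩

end IsAdaptedBasis

section Existence

variable {V : Type*} [NormedAddCommGroup V] [InnerProductSpace ℝ V] [FiniteDimensional ℝ V]
  {J : V →ₗ[ℝ] V} {m : ℕ} (hdim : Module.finrank ℝ V = 2 * m) (hJ : IsComplexStructure J)
include hdim hJ

lemma exists_isAdaptedBasis : ∃ e : Fin m → V, IsAdaptedBasis J e := by
  obtain ⟨f, hf, -⟩ := IsAdaptedBasis.exists_range_subset hdim hJ (e := Fin.elim0)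
    ⟨fun i => i.elim0, fun i => i.elim0⟩ (Nat.zero_le m)
  exact ⟨f, hf⟩

lemma exists_isAdaptedBasis_mem_range {u : V} (hu : ‖u‖ = 1) :
    ∃ e : Fin m → V, IsAdaptedBasis J e ∧ u ∈ Set.range e := by
  have : Nontrivial V := nontrivial_of_ne u 0 (by rintro rfl; simp at hu)
  have hm : 0 < 2 * m := hdim ▸ Module.finrank_pos
  obtain ⟨f, hf, hsub⟩ := IsAdaptedBasis.exists_range_subset hdim hJ (e := fun _ : Fin 1 => u)
    ⟨fun i j => by simp [hu, Subsingleton.elim i j], fun _ _ => hJ.inner_self_map u⟩ (by omega)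
  exact ⟨f, hf, hsub ⟨0, rfl⟩⟩

end Existence
section Converse

variable {V : Type*} [NormedAddCommGroup V] [InnerProductSpace ℝ V] {J : V →ₗ[ℝ] V} {m : ℕ}
  {R : CurvTensor V} {C : ℝ} (hC : ∀ e : Fin m → V, IsAdaptedBasis J e → ∑ i, holSec J R (e i) = C)
include hC

lemma holSec_add_add_holSec_sub_of_sum_holSec_eq {e : Fin m → V} (he : IsAdaptedBasis J e)
    {i j : Fin m} (hij : i ≠ j) :
    holSec J R (e i + e j) + holSec J R (e i - e j)
      = 4 * (holSec J R (e i) + holSec J R (e j)) := by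
  set c := (√2)⁻¹
  have hc : c * c = 1 / 2 := by
    rw [← mul_inv, Real.mul_self_sqrt zero_le_two, one_div]
  have hc4 : c ^ 4 = 1 / 4 := by
    rw [show c ^ 4 = (c * c) ^ 2 by ring, hc]
    norm_num
  have := hC _ (he.update_rotate hij hc)
  rw [← hC e he, ← sub_eq_zero, ← Finset.sum_sub_distrib, Fintype.sum_eq_add i j hij] at this
  · simp only [Function.update_self, Function.update_of_ne hij, holSec_smul, hc4] at this
    linarith
  · intro l ⟨hli, hlj⟩
    simp [hli, hlj]

variable (hK : IsKahlerCurv J R) (hJ : IsComplexStructure J)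
include hK hJ

lemma four_mul_sec_add_sec_of_sum_holSec_eq {e : Fin m → V} (he : IsAdaptedBasis J e)
    {i j : Fin m} (hij : i ≠ j) :
    4 * (R (e i) (e j) (e j) (e i) + R (e i) (J (e j)) (J (e j)) (e i))
      = holSec J R (e i) + holSec J R (e j) := by
  have h₁ := holSec_add_add_holSec_sub_of_sum_holSec_eq hC he hij
  have h₂ := holSec_add_add_holSec_sub_of_sum_holSec_eq hC (he.update_map hJ j) hij
  simp only [Function.update_self, Function.update_of_ne hij] at h₂
  rw [hK.holSec_add_add_holSec_sub hJ] at h₁ h₂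
  simp only [hJ.apply_apply, map_neg, LinearMap.neg_apply, neg_neg, hK.holSec_map hJ] at h₂
  linarith

variable [FiniteDimensional ℝ V] (hdim : Module.finrank ℝ V = 2 * m)
include hdim

lemma four_mul_ricciT_of_sum_holSec_eq {e : Fin m → V} (he : IsAdaptedBasis J e) (i : Fin m) :
    4 * ricciT R (e i) (e i) = ((m : ℝ) + 2) * holSec J R (e i) + C := by
  have hterm (l : Fin m) :
      4 * (R (e l) (e i) (e i) (e l) + R (J (e l)) (e i) (e i) (J (e l)))
        = holSec J R (e i) + holSec J R (e l) + if l = i then 2 * holSec J R (e i) else 0 := by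
    rw [hK.pair_swap (e l), hK.pair_swap (J (e l))]
    split_ifs with hli
    · subst hli
      have : R (e l) (e l) (e l) (e l) = 0 := by linarith [hK.skew₁ (e l) (e l) (e l) (e l)]
      rw [this]
      unfold holSec
      ring
    · rw [add_zero, four_mul_sec_add_sec_of_sum_holSec_eq hC hK hJ he (Ne.symm hli)]
  have := Finset.sum_congr rfl fun l (_ : l ∈ Finset.univ) => hterm l
  rw [← Finset.mul_sum, ← he.ricciT_eq_sum hdim hJ, Finset.sum_add_distrib, Finset.sum_add_distrib,
    hC e he, Finset.sum_ite_eq'] at this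
  simp only [Finset.sum_const, Finset.card_univ, Fintype.card_fin, nsmul_eq_mul, Finset.mem_univ,
    if_true] at this
  linarith

lemma scalarT_eq_of_sum_holSec_eq : scalarT R = ((m : ℝ) + 1) * C := by
  obtain ⟨e, he⟩ := exists_isAdaptedBasis hdim hJ
  have := Finset.sum_congr rfl fun i (_ : i ∈ Finset.univ) =>
    four_mul_ricciT_of_sum_holSec_eq hC hK hJ hdim he i
  rw [← Finset.mul_sum, Finset.sum_add_distrib, ← Finset.mul_sum, hC e he] at this
  simp only [Finset.sum_const, Finset.card_univ, Fintype.card_fin, nsmul_eq_mul] at this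
  rw [he.scalarT_eq_sum hdim hJ hK]
  linarith

lemma holSec_eq_of_sum_holSec_eq (x : V) :
    ((m : ℝ) + 2) * holSec J R x = 4 * ⟪x, x⟫ * ricciT R x x - C * ⟪x, x⟫ ^ 2 := by
  rcases eq_or_ne x 0 with rfl | hx
  · simp [holSec]
  obtain ⟨u, hu, hxu⟩ : ∃ u : V, ‖u‖ = 1 ∧ x = ‖x‖ • u :=
    ⟨‖x‖⁻¹ • x, norm_smul_inv_norm hx,
      by rw [smul_smul, mul_inv_cancel₀ (norm_ne_zero_iff.mpr hx), one_smul]⟩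
  obtain ⟨e, he, i, rfl⟩ := exists_isAdaptedBasis_mem_range hdim hJ hu
  have hunit := four_mul_ricciT_of_sum_holSec_eq hC hK hJ hdim he i
  have hQ := holSec_smul (J := J) (R := R) ‖x‖ (e i)
  have hric : ricciT R (‖x‖ • e i) (‖x‖ • e i) = ‖x‖ ^ 2 * ricciT R (e i) (e i) := by
    simp only [← ricciForm_apply, map_smul, LinearMap.smul_apply, smul_eq_mul]
    ring
  rw [← hxu] at hQ hric
  rw [hQ, hric, real_inner_self_eq_norm_sq]
  linear_combination (-‖x‖ ^ 4) * hunit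

lemma bochnerCurv_eq_zero_of_sum_holSec_eq : bochnerCurv m J R = 0 := by
  refine (isKahlerCurv_bochnerCurv hK hJ m).eq_zero_of_holSec_eq_zero hJ fun x => ?_
  have := holSec_eq_of_sum_holSec_eq hC hK hJ hdim x
  rw [holSec_bochnerCurv hK hJ, scalarT_eq_of_sum_holSec_eq hC hK hJ hdim]
  field_simp
  linear_combination this

end Converse

lemma sum_holSec_eq_of_bochnerCurv_eq_zero {V : Type*} [NormedAddCommGroup V]
    [InnerProductSpace ℝ V] [FiniteDimensional ℝ V] {J : V →ₗ[ℝ] V} {m : ℕ} {R : CurvTensor V}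
    (hdim : Module.finrank ℝ V = 2 * m) (hK : IsKahlerCurv J R) (hJ : IsComplexStructure J)
    (hB : bochnerCurv m J R = 0) {e : Fin m → V} (he : IsAdaptedBasis J e) :
    ((m : ℝ) + 1) * ∑ i, holSec J R (e i) = scalarT R := by
  have hterm (i : Fin m) :
      ((m : ℝ) + 1) * ((m : ℝ) + 2) * holSec J R (e i)
        = 4 * ((m : ℝ) + 1) * ricciT R (e i) (e i) - scalarT R := by
    have := holSec_bochnerCurv hK hJ m (e i)
    rw [hB, he.1, if_pos rfl, show holSec J (0 : CurvTensor V) (e i) = 0 from rfl] at this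
    field_simp at this
    linear_combination -this
  have := Finset.sum_congr rfl fun i (_ : i ∈ Finset.univ) => hterm i
  rw [← Finset.mul_sum, Finset.sum_sub_distrib, ← Finset.mul_sum] at this
  simp only [Finset.sum_const, Finset.card_univ, Fintype.card_fin, nsmul_eq_mul] at this
  refine mul_left_cancel₀ (by positivity : (m : ℝ) + 2 ≠ 0) ?_
  linear_combination this - 2 * ((m : ℝ) + 1) * he.scalarT_eq_sum hdim hJ hK

/-- A Kähler manifold of real dimension `2m` has vanishing Bochner
tensor iff at every point `Σᵢ R(eᵢ, Jeᵢ, Jeᵢ, eᵢ)` is independent of the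
`J`-adapted orthonormal basis `{eᵢ, Jeᵢ}`. -/
theorem bochner_vanishes_iff_basis_independence
    {V : Type*} [NormedAddCommGroup V] [InnerProductSpace ℝ V]
    [FiniteDimensional ℝ V] {P : Type*}
    (m : ℕ) (hdim : Module.finrank ℝ V = 2 * m)
    (J : V →ₗ[ℝ] V) (hJ : IsComplexStructure J)
    (R : P → CurvTensor V) (hR : ∀ p, IsKahlerCurv J (R p)) :
    (∀ p x y z u, bochnerT m J (R p) x y z u = 0) ↔
      (∀ (p : P) (e f : Fin m → V), IsAdaptedBasis J e → IsAdaptedBasis J f →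
        ∑ i, R p (e i) (J (e i)) (J (e i)) (e i) =
          ∑ i, R p (f i) (J (f i)) (J (f i)) (f i)) := by
  have hvanish (p : P) :
      (∀ x y z u, bochnerT m J (R p) x y z u = 0) ↔ bochnerCurv m J (R p) = 0 := by
    simp only [← bochnerCurv_apply, LinearMap.ext_iff, LinearMap.zero_apply]
  simp only [hvanish]
  constructor
  · intro hB p e f he hf
    refine mul_left_cancel₀ (by positivity : (m : ℝ) + 1 ≠ 0) ?_
    exact (sum_holSec_eq_of_bochnerCurv_eq_zero hdim (hR p) hJ (hB p) he).trans
      (sum_holSec_eq_of_bochnerCurv_eq_zero hdim (hR p) hJ (hB p) hf).symm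
  · intro hsum p
    obtain ⟨e₀, he₀⟩ := exists_isAdaptedBasis hdim hJ
    exact bochnerCurv_eq_zero_of_sum_holSec_eq (fun e he => hsum p e e₀ he he₀) (hR p) hJ hdim
end

section
/- Let V be a 2m-dimensional real inner product space with compatible complex structure J (m ≥ 3), and let R be a Kähler-type algebraic curvature tensor on V with vanishing Bochner tensor. If R(x, Jx, y, z) = 0 for all unit vectors x, y, z spanning an antiholomorphic 3-plane, then the Ricci tensor S of R satisfies S(y, z) = 0 whenever g(y,z) = g(y,Jz) = 0. -/
open scoped RealInnerProductSpace

/-!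
Given `y ⊥ z, Jz`, pick a unit vector `x` orthogonal to `y, Jy, z, Jz` (possible since `2m > 4`);
then `x, y, Jz` span an antiholomorphic 3-plane. On `(x, Jx, y, Jz)` every Ricci term of the
Bochner formula vanishes except `-2 g(x, J Jx) S(y, J Jz) = -2 S(y, z)`, and all metric terms
vanish, so `0 = R(x, Jx, y, Jz) + S(y, z) / (m + 2)`. The curvature term is zero by hypothesis
after rescaling `y` and `Jz` to unit length.
-/

namespace IsComplexStructure

variable {V : Type*} [NormedAddCommGroup V] [InnerProductSpace ℝ V] {J : V →ₗ[ℝ] V}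

lemma inner_apply_left (hJ : IsComplexStructure J) (a b : V) : ⟪J a, b⟫ = -⟪a, J b⟫ := by
  have h := hJ.2 a (J b)
  rw [hJ.1, inner_neg_right] at h
  linarith

lemma inner_apply_self (hJ : IsComplexStructure J) (a : V) : ⟪a, J a⟫ = 0 := by
  have h := hJ.inner_apply_left a a
  rw [real_inner_comm] at h
  linarith

end IsComplexStructure

section

variable {V : Type*} [NormedAddCommGroup V] [InnerProductSpace ℝ V]

lemma exists_norm_eq_one_forall_inner_eq_zero [FiniteDimensional ℝ V] {ι : Type*} [Fintype ι]
    (v : ι → V) (hcard : Fintype.card ι < Module.finrank ℝ V) :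
    ∃ x : V, ‖x‖ = 1 ∧ ∀ i, ⟪x, v i⟫ = 0 := by
  set W := Submodule.span ℝ (Set.range v)
  have hW : Module.finrank ℝ W < Module.finrank ℝ V :=
    (finrank_range_le_card v).trans_lt hcard
  have hWperp : Wᗮ ≠ ⊥ := by
    rw [Ne, Submodule.orthogonal_eq_bot_iff]
    rintro hW_top
    rw [hW_top, finrank_top] at hW
    exact hW.false
  obtain ⟨w, hw, hw0⟩ := Submodule.exists_mem_ne_zero_of_ne_bot hWperp
  refine ⟨‖w‖⁻¹ • w, norm_smul_inv_norm hw0, fun i => ?_⟩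
  rw [real_inner_smul_left, real_inner_comm,
    hw (v i) (Submodule.subset_span (Set.mem_range_self i)), mul_zero]

lemma AntiholoTriple.smul {J : V →ₗ[ℝ] V} {x y z : V} (h : AntiholoTriple J x y z) (a b : ℝ) :
    AntiholoTriple J x (a • y) (b • z) := by
  obtain ⟨hxy, hxz, hyz, hxx, hyy, hzz, hxJy, hxJz, hyJz⟩ := h
  refine ⟨?_, ?_, ?_, hxx, ?_, ?_, ?_, ?_, ?_⟩ <;>
    simp only [map_smul, real_inner_smul_left, real_inner_smul_right, *, mul_zero]

lemma CurvTensor.apply_eq_zero_of_antiholoTriple {J : V →ₗ[ℝ] V} {R : CurvTensor V}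
    (h0 : ∀ x y z : V, ‖x‖ = 1 → ‖y‖ = 1 → ‖z‖ = 1 → AntiholoTriple J x y z →
      R x (J x) y z = 0)
    {x y z : V} (hx : ‖x‖ = 1) (ht : AntiholoTriple J x y z) : R x (J x) y z = 0 := by
  rcases eq_or_ne y 0 with rfl | hy
  · simp
  rcases eq_or_ne z 0 with rfl | hz
  · simp
  have hunit := h0 x _ _ hx (norm_smul_inv_norm hy) (norm_smul_inv_norm hz)
    (ht.smul ‖y‖⁻¹ ‖z‖⁻¹)
  simpa [hy, hz] using hunit

variable [FiniteDimensional ℝ V]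

lemma ricciT_neg_right (R : CurvTensor V) (y z : V) : ricciT R y (-z) = -ricciT R y z := by
  simp [ricciT]

lemma bochnerT_apply_self_of_antiholoTriple (m : ℕ) {J : V →ₗ[ℝ] V} (hJ : IsComplexStructure J)
    (R : CurvTensor V) {x y z : V} (hx : ‖x‖ = 1) (ht : AntiholoTriple J x y z) :
    bochnerT m J R x (J x) y z = R x (J x) y z - ricciT R y (J z) / (m + 2) := by
  obtain ⟨hxy, hxz, -, -, -, -, hxJy, hxJz, hyJz⟩ := ht
  have hxx : ⟪x, x⟫ = 1 := by rw [real_inner_self_eq_norm_sq, hx, one_pow]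
  simp only [bochnerT, hJ.inner_apply_left, hJ.1, inner_neg_right, hxy, hxz, hxJy, hxJz, hyJz,
    hxx, neg_zero]
  field_simp
  ring

end

theorem ricci_vanishes_of_bochner_and_antiholo_general
    {V : Type*} [NormedAddCommGroup V] [InnerProductSpace ℝ V]
    [FiniteDimensional ℝ V]
    (m : ℕ) (hm : 3 ≤ m) (hdim : Module.finrank ℝ V = 2 * m)
    (J : V →ₗ[ℝ] V) (hJ : IsComplexStructure J)
    (R : CurvTensor V)
    (hB : ∀ x y z u, bochnerT m J R x y z u = 0)
    (h0 : ∀ x y z : V, ‖x‖ = 1 → ‖y‖ = 1 → ‖z‖ = 1 → AntiholoTriple J x y z →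
      R x (J x) y z = 0) :
    ∀ y z : V, ⟪y, z⟫ = 0 → ⟪y, J z⟫ = 0 → ricciT R y z = 0 := by
  intro y z hyz hyJz
  obtain ⟨x, hx, hxv⟩ := exists_norm_eq_one_forall_inner_eq_zero ![y, J y, z, J z]
    (by rw [Fintype.card_fin, hdim]; omega)
  obtain ⟨hxy, hxJy, hxz, hxJz⟩ : ⟪x, y⟫ = 0 ∧ ⟪x, J y⟫ = 0 ∧ ⟪x, z⟫ = 0 ∧ ⟪x, J z⟫ = 0 :=
    ⟨hxv 0, hxv 1, hxv 2, hxv 3⟩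
  have ht : AntiholoTriple J x y (J z) := by
    refine ⟨hxy, hxJz, hyJz, hJ.inner_apply_self x, hJ.inner_apply_self y,
      hJ.inner_apply_self (J z), hxJy, ?_, ?_⟩ <;>
      simp only [hJ.1, inner_neg_right, hxz, hyz, neg_zero]
  have hBx := bochnerT_apply_self_of_antiholoTriple m hJ R hx ht
  rw [hB, CurvTensor.apply_eq_zero_of_antiholoTriple h0 hx ht, hJ.1, ricciT_neg_right] at hBx
  have hm2 : (m : ℝ) + 2 ≠ 0 := by positivity
  field_simp at hBx
  linarith

/-- A Kähler-type algebraic curvature tensor with vanishing Bochner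
tensor and `R(x,Jx,y,z) = 0` on antiholomorphic unit triples has `S(y,z) = 0`
whenever `g(y,z) = g(y,Jz) = 0`. -/
theorem ricci_vanishes_of_bochner_and_antiholo
    {V : Type*} [NormedAddCommGroup V] [InnerProductSpace ℝ V]
    [FiniteDimensional ℝ V]
    (m : ℕ) (hm : 3 ≤ m) (hdim : Module.finrank ℝ V = 2 * m)
    (J : V →ₗ[ℝ] V) (hJ : IsComplexStructure J)
    (R : CurvTensor V) (hR : IsKahlerCurv J R)
    (hB : ∀ x y z u, bochnerT m J R x y z u = 0)
    (h0 : ∀ x y z : V, ‖x‖ = 1 → ‖y‖ = 1 → ‖z‖ = 1 → AntiholoTriple J x y z →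
      R x (J x) y z = 0) :
    ∀ y z : V, ⟪y, z⟫ = 0 → ⟪y, J z⟫ = 0 → ricciT R y z = 0 :=
  ricci_vanishes_of_bochner_and_antiholo_general m hm hdim J hJ R hB h0
end
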